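/- arXiv:1811.10675 — 2 statements merged into one kernel-verified Lean document; each statement's English description precedes it below -/
import Mathlib

section
/- A group G is diffuse if and only if for every nontrivial finitely generated subgroup F of G there exists a surjective homomorphism from F onto a nontrivial diffuse group. -/
/-- `a` is an extreme point of `A` if `a ∈ A` and `a⁻¹A ∩ A⁻¹a = {1}`. -/
def IsExtremePoint {G : Type*} [Group G] (A : Set G) (a : G) : Prop :=
  a ∈ A ∧ {h : G | ∃ x ∈ A, h = a⁻¹ * x} ∩ {h : G | ∃ y ∈ A, h = y⁻¹ * a} = {1}

/-- A group is weakly diffuse if every nonempty finite subset has an extreme point. -/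
def WeaklyDiffuse (G : Type*) [Group G] : Prop :=
  ∀ A : Set G, A.Finite → A.Nonempty → ∃ a, IsExtremePoint A a

/-- A group is diffuse if every finite subset with more than one element has
at least two extreme points. -/
def Diffuse (G : Type*) [Group G] : Prop :=
  ∀ A : Set G, A.Finite → 1 < A.ncard →
    ∃ a b, a ≠ b ∧ IsExtremePoint A a ∧ IsExtremePoint A b

section Aux

variable {G : Type*} {K : Type*} [Group G] [Group K]

lemma isExtremePoint_iff' {A : Set G} {a : G} :
    IsExtremePoint A a ↔ a ∈ A ∧ ∀ x ∈ A, ∀ y ∈ A, a⁻¹ * x = y⁻¹ * a → x = a := by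
  constructor
  · rintro ⟨ha, h⟩
    refine ⟨ha, fun x hx y hy hxy => ?_⟩
    have hmem : a⁻¹ * x ∈ {h : G | ∃ x ∈ A, h = a⁻¹ * x} ∩ {h : G | ∃ y ∈ A, h = y⁻¹ * a} :=
      ⟨⟨x, hx, rfl⟩, ⟨y, hy, hxy⟩⟩
    rw [h] at hmem
    have : a⁻¹ * x = 1 := hmem
    have := congrArg (a * ·) this
    simpa using this
  · rintro ⟨ha, h⟩
    refine ⟨ha, ?_⟩
    ext g
    constructor
    · rintro ⟨⟨x, hx, rfl⟩, ⟨y, hy, hg⟩⟩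
      have hxa : x = a := h x hx y hy hg
      simp [hxa]
    · rintro rfl
      exact ⟨⟨a, ha, by simp⟩, ⟨a, ha, by simp⟩⟩

lemma extreme_singleton (a : G) : IsExtremePoint {a} a := by
  rw [isExtremePoint_iff']
  exact ⟨rfl, by rintro x rfl y rfl _; rfl⟩

lemma extreme_mono {A B : Set G} {a : G} (hA : a ∈ A) (hAB : A ⊆ B)
    (h : IsExtremePoint B a) : IsExtremePoint A a := by
  rw [isExtremePoint_iff'] at h ⊢
  exact ⟨hA, fun x hx y hy hxy => h.2 x (hAB hx) y (hAB hy) hxy⟩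

lemma extreme_smul (g : G) {A : Set G} {a : G} (h : IsExtremePoint A a) :
    IsExtremePoint ((g * ·) '' A) (g * a) := by
  rw [isExtremePoint_iff'] at h ⊢
  refine ⟨⟨a, h.1, rfl⟩, ?_⟩
  rintro _ ⟨x, hx, rfl⟩ _ ⟨y, hy, rfl⟩ hxy
  have h1 : a⁻¹ * x = y⁻¹ * a := by
    have : (g * a)⁻¹ * (g * x) = (g * y)⁻¹ * (g * a) := hxy
    simpa [mul_assoc] using this
  rw [h.2 x hx y hy h1]

lemma extreme_inv {A : Set G} {a : G} (h : IsExtremePoint A a) :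
    IsExtremePoint (Inv.inv '' A) a⁻¹ := by
  rw [isExtremePoint_iff'] at h ⊢
  refine ⟨⟨a, h.1, rfl⟩, ?_⟩
  rintro _ ⟨x, hx, rfl⟩ _ ⟨y, hy, rfl⟩ hxy
  -- hxy : (a⁻¹)⁻¹ * x⁻¹ = (y⁻¹)⁻¹ * a⁻¹   i.e.  a * x⁻¹ = y * a⁻¹
  have hxy' : a * x⁻¹ = y * a⁻¹ := by simpa using hxy
  have key : a⁻¹ * y = x⁻¹ * a := by
    have := congrArg (fun z => a⁻¹ * z * a) hxy'
    simpa [mul_assoc] using this.symm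
  have hy' : y = a := h.2 y hy x hx key
  rw [hy'] at hxy'
  have hx' : x⁻¹ = a⁻¹ := by
    have := congrArg (fun z => a⁻¹ * z) hxy'
    simpa [← mul_assoc] using this
  rw [hx']

lemma extreme_image_iff (f : G →* K) (hf : Function.Injective f) {A : Set G} {a : G}
    (ha : a ∈ A) : IsExtremePoint (f '' A) (f a) ↔ IsExtremePoint A a := by
  rw [isExtremePoint_iff', isExtremePoint_iff']
  constructor
  · rintro ⟨-, h⟩
    refine ⟨ha, fun x hx y hy hxy => ?_⟩
    apply hf
    refine h (f x) ⟨x, hx, rfl⟩ (f y) ⟨y, hy, rfl⟩ ?_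
    rw [← map_inv, ← map_inv, ← map_mul, ← map_mul, hxy]
  · rintro ⟨-, h⟩
    refine ⟨⟨a, ha, rfl⟩, ?_⟩
    rintro _ ⟨x, hx, rfl⟩ _ ⟨y, hy, rfl⟩ hxy
    have : a⁻¹ * x = y⁻¹ * a := by
      apply hf
      rw [map_mul, map_mul, map_inv, map_inv]
      exact hxy
    rw [h x hx y hy this]

lemma weaklyDiffuse_diffuse (h : WeaklyDiffuse G) : Diffuse G := by
  intro A hfin hcard
  have hne : A.Nonempty := by
    rw [← Set.ncard_pos hfin]; omega
  obtain ⟨a, ha⟩ := h A hfin hne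
  set B : Set G := (a⁻¹ * ·) '' A with hBdef
  have hBA : (a * ·) '' B = A := by
    rw [hBdef, Set.image_image]
    simp
  have hBfin : B.Finite := hfin.image _
  have hBcard : 1 < B.ncard := by
    rwa [hBdef, Set.ncard_image_of_injective _ (mul_right_injective a⁻¹)]
  have hB1 : (1 : G) ∈ B := ⟨a, ha.1, by simp⟩
  set C : Set G := B ∪ Inv.inv '' B with hCdef
  have hCfin : C.Finite := hBfin.union (hBfin.image _)
  have hCne : C.Nonempty := ⟨1, Or.inl hB1⟩
  have hCinv : Inv.inv '' C = C := by
    have h2 : Inv.inv '' (Inv.inv '' B) = B := by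
      rw [Set.image_image]; simp
    rw [hCdef, Set.image_union, h2, Set.union_comm]
  obtain ⟨c, hc⟩ := h C hCfin hCne
  obtain ⟨x, hxB, hxne⟩ := Set.exists_ne_of_one_lt_ncard hBcard 1
  have hc1 : c ≠ 1 := by
    rintro rfl
    rcases isExtremePoint_iff'.1 hc with ⟨-, hprop⟩
    exact hxne (hprop x (Or.inl hxB) x⁻¹ (Or.inr ⟨x, hxB, rfl⟩) (by group))
  have hmain : ∃ c', c' ≠ 1 ∧ IsExtremePoint B c' := by
    rcases hc.1 with hcB | hcB
    · exact ⟨c, hc1, extreme_mono hcB Set.subset_union_left hc⟩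
    · obtain ⟨b, hbB, rfl⟩ := hcB
      have : IsExtremePoint C b := by
        have := extreme_inv hc
        rw [hCinv] at this
        simpa using this
      refine ⟨b, fun hb1 => hc1 (by simp [hb1]), extreme_mono hbB Set.subset_union_left this⟩
  obtain ⟨c', hc'1, hc'⟩ := hmain
  refine ⟨a, a * c', fun heq =>
    hc'1 (mul_left_cancel (a := a) (show a * c' = a * 1 by simpa using heq.symm)), ha, ?_⟩
  have := extreme_smul a hc'
  rwa [hBA] at this

end Aux

set_option maxHeartbeats 1000000 in
/-- **Burns–Hale for diffuse groups.** `G` is diffuse iff every nontrivial finitely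
generated subgroup surjects onto a nontrivial diffuse group. -/
theorem diffuse_iff_locallyProjectable {G : Type u} [Group G] :
    Diffuse G ↔
      ∀ F : Subgroup G, F.FG → F ≠ ⊥ →
        ∃ (H : Type u) (_ : Group H) (φ : F →* H),
          Function.Surjective φ ∧ Nontrivial H ∧ Diffuse H := by
  constructor
  · -- forward: subgroups of diffuse groups are diffuse
    intro hd F _ hFne
    refine ⟨F, inferInstance, MonoidHom.id F, Function.surjective_id, ?_, ?_⟩
    · exact F.nontrivial_iff_ne_bot.2 hFne
    · intro A hfin hcard
      have hcard' : 1 < (F.subtype '' A).ncard := by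
        rwa [Set.ncard_image_of_injective _ F.subtype_injective]
      obtain ⟨a, b, hab, hA, hB⟩ := hd (F.subtype '' A) (hfin.image _) hcard'
      obtain ⟨a₀, ha₀, rfl⟩ := hA.1
      obtain ⟨b₀, hb₀, rfl⟩ := hB.1
      refine ⟨a₀, b₀, fun h => hab (by rw [h]), ?_, ?_⟩
      · exact (extreme_image_iff F.subtype F.subtype_injective ha₀).1 hA
      · exact (extreme_image_iff F.subtype F.subtype_injective hb₀).1 hB
  · intro hloc
    apply weaklyDiffuse_diffuse
    have key : ∀ n : ℕ, ∀ A : Set G, A.Finite → A.Nonempty → A.ncard ≤ n →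
        ∃ a, IsExtremePoint A a := by
      intro n
      induction n using Nat.strong_induction_on with
      | _ n ih =>
        intro A hfin hne hcard
        obtain ⟨a₀, ha₀⟩ := hne
        by_cases hone : A.ncard = 1
        · obtain ⟨x, rfl⟩ := Set.ncard_eq_one.1 hone
          exact ⟨x, extreme_singleton x⟩
        · have h2 : 1 < A.ncard := by
            have : 0 < A.ncard := (Set.ncard_pos hfin).2 ⟨a₀, ha₀⟩
            omega
          set B : Set G := (a₀⁻¹ * ·) '' A with hBdef
          have hBA : (a₀ * ·) '' B = A := by
            rw [hBdef, Set.image_image]; simp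
          have hBfin : B.Finite := hfin.image _
          have hBcard : B.ncard = A.ncard :=
            Set.ncard_image_of_injective _ (mul_right_injective a₀⁻¹)
          have hB1 : (1 : G) ∈ B := ⟨a₀, ha₀, by simp⟩
          suffices hB : ∃ b, IsExtremePoint B b by
            obtain ⟨b, hb⟩ := hB
            refine ⟨a₀ * b, ?_⟩
            have := extreme_smul a₀ hb
            rwa [hBA] at this
          -- main Burns–Hale step
          set F : Subgroup G := Subgroup.closure B with hFdef
          have hBF : B ⊆ (F : Set G) := Subgroup.subset_closure
          have hFG : F.FG := (Subgroup.fg_iff F).2 ⟨B, rfl, hBfin⟩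
          have hFbot : F ≠ ⊥ := by
            obtain ⟨x, hxB, hxne⟩ := Set.exists_ne_of_one_lt_ncard (hBcard ▸ h2) 1
            intro hbot
            have hxF : x ∈ F := hBF hxB
            rw [hbot, Subgroup.mem_bot] at hxF
            exact hxne hxF
          obtain ⟨H, instH, φ, hsurj, hHnt, hHdiff⟩ := hloc F hFG hFbot
          set A' : Set F := F.subtype ⁻¹' B with hA'def
          have hA'val : F.subtype '' A' = B := by
            rw [hA'def, Set.image_preimage_eq_iff]
            rwa [Subgroup.coe_subtype, Subtype.range_coe_subtype]
          have hA'fin : A'.Finite := hBfin.preimage F.subtype_injective.injOn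
          have hA'card : A'.ncard = B.ncard := by
            rw [← hA'val, Set.ncard_image_of_injective _ F.subtype_injective]
          set D : Set H := φ '' A' with hDdef
          have hDfin : D.Finite := hA'fin.image _
          have h1A' : (1 : F) ∈ A' := by
            show F.subtype 1 ∈ B
            simpa using hB1
          have hD1 : (1 : H) ∈ D := ⟨1, h1A', map_one φ⟩
          have hDne2 : ∃ d ∈ D, d ≠ (1 : H) := by
            by_contra hcon
            push_neg at hcon
            have hall : ∀ g (hg : g ∈ F), φ ⟨g, hg⟩ = 1 := by
              intro g hg
              refine Subgroup.closure_induction (k := B)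
                (p := fun g hg => φ ⟨g, hg⟩ = 1) ?_ ?_ ?_ ?_ hg
              · intro x hx
                exact hcon (φ ⟨x, hBF hx⟩) ⟨⟨x, hBF hx⟩, hx, rfl⟩
              · exact map_one φ
              · intro x y hx hy ihx ihy
                have : (⟨x * y, mul_mem hx hy⟩ : F) = ⟨x, hx⟩ * ⟨y, hy⟩ := rfl
                rw [this, map_mul, ihx, ihy, one_mul]
              · intro x hx ihx
                have : (⟨x⁻¹, inv_mem hx⟩ : F) = (⟨x, hx⟩ : F)⁻¹ := rfl
                rw [this, map_inv, ihx, inv_one]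
            obtain ⟨y, hy1⟩ := exists_ne (1 : H)
            obtain ⟨f, rfl⟩ := hsurj y
            exact hy1 (hall f.1 f.2)
          obtain ⟨d, hdD, hdne⟩ := hDne2
          have hDcard : 1 < D.ncard :=
            (Set.one_lt_ncard hDfin).2 ⟨d, hdD, 1, hD1, hdne⟩
          obtain ⟨h₁, h₂, -, hext1, -⟩ := hHdiff D hDfin hDcard
          set Ah : Set F := A' ∩ φ ⁻¹' {h₁} with hAhdef
          have hAhss : Ah ⊂ A' := by
            refine ⟨Set.inter_subset_left, fun hsub => ?_⟩
            obtain ⟨d', hd'D, hd'ne⟩ := Set.exists_ne_of_one_lt_ncard hDcard h₁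
            obtain ⟨x, hxA', hxd⟩ := hd'D
            have := (hsub hxA').2
            rw [Set.mem_preimage, Set.mem_singleton_iff] at this
            exact hd'ne (hxd ▸ this)
          have hAhne : Ah.Nonempty := by
            obtain ⟨x, hxA', hxh⟩ := hext1.1
            exact ⟨x, hxA', by simp [hxh]⟩
          have hAhfin : Ah.Finite := hA'fin.subset Set.inter_subset_left
          have hAhcard : Ah.ncard < n :=
            lt_of_lt_of_le (Set.ncard_lt_ncard hAhss hA'fin)
              (by rw [hA'card, hBcard]; exact hcard)
          -- apply the inductive hypothesis to the image of Ah in G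
          have himgcard : (F.subtype '' Ah).ncard = Ah.ncard :=
            Set.ncard_image_of_injective _ F.subtype_injective
          obtain ⟨a, haext⟩ := ih Ah.ncard hAhcard (F.subtype '' Ah) (hAhfin.image _)
            (hAhne.image _) (le_of_eq himgcard)
          obtain ⟨a₁, ha₁Ah, rfl⟩ := haext.1
          have ha₁ : IsExtremePoint Ah a₁ :=
            (extreme_image_iff F.subtype F.subtype_injective ha₁Ah).1 haext
          have hφa : φ a₁ = h₁ := by
            have := ha₁Ah.2
            rwa [Set.mem_preimage, Set.mem_singleton_iff] at this
          have hA'ext : IsExtremePoint A' a₁ := by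
            rw [isExtremePoint_iff']
            refine ⟨ha₁Ah.1, fun x hx y hy hxy => ?_⟩
            have hφeq : (φ a₁)⁻¹ * φ x = (φ y)⁻¹ * φ a₁ := by
              rw [← map_inv, ← map_inv, ← map_mul, ← map_mul, hxy]
            rcases isExtremePoint_iff'.1 hext1 with ⟨-, hprop⟩
            have hx' : φ x = h₁ := by
              refine hprop (φ x) ⟨x, hx, rfl⟩ (φ y) ⟨y, hy, rfl⟩ ?_
              rwa [hφa] at hφeq
            have hy' : φ y = h₁ := by
              rw [hφa, hx'] at hφeq
              have : (φ y)⁻¹ * h₁ = 1 := by rw [← hφeq]; simp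
              have := congrArg (φ y * ·) this
              simpa [mul_assoc] using this.symm
            exact (isExtremePoint_iff'.1 ha₁).2 x ⟨hx, by simp [hx']⟩
              y ⟨hy, by simp [hy']⟩ hxy
          refine ⟨F.subtype a₁, ?_⟩
          have := (extreme_image_iff F.subtype F.subtype_injective ha₁Ah.1).2 hA'ext
          rwa [hA'val] at this
    intro A hfin hne
    exact key A.ncard A hfin hne le_rfl
end

section
/- A group G is circularly orderable if and only if for every finite subset X of G there exists a surjective homomorphism φ from ⟨X⟩ onto a circularly orderable group such that the subgroup generated by X^{-1}X ∩ ker(φ) is left-orderable. -/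
/-- `c` is a (left-invariant) circular ordering of `G`. -/
def IsCircularOrdering {G : Type*} [Group G] (c : G → G → G → ℤ) : Prop :=
  (∀ x y z : G, c x y z = 0 ∨ c x y z = 1 ∨ c x y z = -1) ∧
  (∀ x y z : G, c x y z = 0 ↔ (x = y ∨ x = z ∨ y = z)) ∧
  (∀ x₁ x₂ x₃ x₄ : G, c x₁ x₂ x₃ - c x₁ x₂ x₄ + c x₁ x₃ x₄ - c x₂ x₃ x₄ = 0) ∧
  (∀ g x y z : G, c (g * x) (g * y) (g * z) = c x y z)

/-- A group is circularly orderable if it admits a circular ordering. -/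
def CircularlyOrderable (G : Type*) [Group G] : Prop :=
  ∃ c : G → G → G → ℤ, IsCircularOrdering c

/-- A group is left-orderable if it admits a strict total order invariant under
left multiplication. -/
def LeftOrderable (G : Type*) [Group G] : Prop :=
  ∃ r : G → G → Prop, IsStrictTotalOrder G r ∧ ∀ f g h : G, r g h → r (f * g) (f * h)

/-!
For finite `X ⊆ G`, let `φ : ⟨X⟩ → C` and the left order on `K = ⟨X⁻¹X ∩ ker φ⟩` be given.
On `⟨X⟩` the function
`c(x, y, z) = c_C(φ x, φ y, φ z) + t(x⁻¹y) + t(y⁻¹z) - t(x⁻¹z)`,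
where `t` is the sign of the left order on `K ∩ ker φ` and `0` elsewhere, is a left-invariant
cocycle, being a pulled-back cocycle plus a coboundary. On triples from `X`, whose pairs in a
common fibre of `φ` differ by elements of `K`, it is the lexicographic circular order (fibres
ordered by `K`, fibres among each other by `C`), so it vanishes exactly on degenerate triples.
A circular ordering of `G` is the limit of these partial orderings along an ultrafilter on the
finite subsets of `G`. Conversely, a circular ordering restricts to `⟨X⟩`, and `φ = id` has
trivial kernel.
-/

open Filter

section CircularOrdering

variable {G : Type*} [Group G]

theorem IsCircularOrdering.comp_injective {H : Type*} [Group H] {c : G → G → G → ℤ}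
    (hc : IsCircularOrdering c) (f : H →* G) (hf : Function.Injective f) :
    IsCircularOrdering fun x y z ↦ c (f x) (f y) (f z) := by
  refine ⟨fun x y z ↦ hc.1 _ _ _, fun x y z ↦ ?_, fun x₁ x₂ x₃ x₄ ↦ hc.2.2.1 _ _ _ _,
    fun g x y z ↦ ?_⟩
  · rw [hc.2.1, hf.eq_iff, hf.eq_iff, hf.eq_iff]
  · simp only [map_mul, hc.2.2.2]

structure IsCircularOrderingOn (S : Set G) (c : G → G → G → ℤ) : Prop where
  mem : ∀ x ∈ S, ∀ y ∈ S, ∀ z ∈ S, c x y z = 0 ∨ c x y z = 1 ∨ c x y z = -1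
  eq_zero_iff : ∀ x ∈ S, ∀ y ∈ S, ∀ z ∈ S, c x y z = 0 ↔ (x = y ∨ x = z ∨ y = z)
  cocycle : ∀ x₁ ∈ S, ∀ x₂ ∈ S, ∀ x₃ ∈ S, ∀ x₄ ∈ S,
    c x₁ x₂ x₃ - c x₁ x₂ x₄ + c x₁ x₃ x₄ - c x₂ x₃ x₄ = 0
  mul_left : ∀ g x y z, x ∈ S → y ∈ S → z ∈ S → g * x ∈ S → g * y ∈ S → g * z ∈ S →
    c (g * x) (g * y) (g * z) = c x y z

theorem IsCircularOrderingOn.exists_of_subgroup {L : Subgroup G} {S : Set G} (hS : S ⊆ L)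
    {c : L → L → L → ℤ} (hc : IsCircularOrderingOn ((↑) ⁻¹' S) c) :
    ∃ c' : G → G → G → ℤ, IsCircularOrderingOn S c' := by
  classical
  let c' (x y z : G) : ℤ :=
    if h : x ∈ L ∧ y ∈ L ∧ z ∈ L then c ⟨x, h.1⟩ ⟨y, h.2.1⟩ ⟨z, h.2.2⟩ else 0
  have hc' {x y z : G} (hx : x ∈ S) (hy : y ∈ S) (hz : z ∈ S) :
      c' x y z = c ⟨x, hS hx⟩ ⟨y, hS hy⟩ ⟨z, hS hz⟩ :=
    dif_pos ⟨hS hx, hS hy, hS hz⟩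
  refine ⟨c', ⟨fun x hx y hy z hz ↦ ?_, fun x hx y hy z hz ↦ ?_,
    fun x₁ h₁ x₂ h₂ x₃ h₃ x₄ h₄ ↦ ?_, fun g x y z hx hy hz hgx hgy hgz ↦ ?_⟩⟩
  · rw [hc' hx hy hz]
    exact hc.mem _ hx _ hy _ hz
  · rw [hc' hx hy hz, hc.eq_zero_iff _ hx _ hy _ hz]
    simp only [Subtype.mk.injEq]
  · rw [hc' h₁ h₂ h₃, hc' h₁ h₂ h₄, hc' h₁ h₃ h₄, hc' h₂ h₃ h₄]
    exact hc.cocycle _ h₁ _ h₂ _ h₃ _ h₄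
  · have hg : g ∈ L := by simpa using mul_mem (hS hgx) (inv_mem (hS hx))
    rw [hc' hgx hgy hgz, hc' hx hy hz]
    exact hc.mul_left ⟨g, hg⟩ ⟨x, hS hx⟩ ⟨y, hS hy⟩ ⟨z, hS hz⟩ hx hy hz hgx hgy hgz

theorem circularlyOrderable_of_forall_finset
    (h : ∀ F : Finset G, ∃ c : G → G → G → ℤ, IsCircularOrderingOn (F : Set G) c) :
    CircularlyOrderable G := by
  classical
  choose c hc using h
  obtain ⟨U, hU⟩ := Ultrafilter.exists_le (atTop : Filter (Finset G))
  have eventually_superset (s : Finset G) : ∀ᶠ F in (U : Filter (Finset G)), s ⊆ F :=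
    hU (eventually_ge_atTop s)
  have large (s : Finset G) {P : Finset G → Prop} (hP : ∀ᶠ F in (U : Filter _), P F) :
      ∃ F, s ⊆ F ∧ P F :=
    ((eventually_superset s).and hP).exists
  have limit (x y z : G) :
      ∃ v ∈ ({0, 1, -1} : Set ℤ), ∀ᶠ F in (U : Filter _), c F x y z = v := by
    refine (Ultrafilter.eventually_exists_mem_iff (by simp)).1
      ((eventually_superset {x, y, z}).mono fun F hF ↦ ⟨_, ?_, rfl⟩)
    exact (hc F).mem x (hF (by simp)) y (hF (by simp)) z (hF (by simp))
  choose d hd hlim using limit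
  refine ⟨d, hd, fun x y z ↦ ?_, fun x₁ x₂ x₃ x₄ ↦ ?_, fun g x y z ↦ ?_⟩
  · obtain ⟨F, hF, hdF⟩ := large {x, y, z} (hlim x y z)
    rw [← hdF]
    exact (hc F).eq_zero_iff x (hF (by simp)) y (hF (by simp)) z (hF (by simp))
  · obtain ⟨F, hF, h₁, h₂, h₃, h₄⟩ := large {x₁, x₂, x₃, x₄}
      ((hlim x₁ x₂ x₃).and ((hlim x₁ x₂ x₄).and ((hlim x₁ x₃ x₄).and (hlim x₂ x₃ x₄))))
    rw [← h₁, ← h₂, ← h₃, ← h₄]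
    exact (hc F).cocycle _ (hF (by simp)) _ (hF (by simp)) _ (hF (by simp)) _ (hF (by simp))
  · obtain ⟨F, hF, h₁, h₂⟩ := large {x, y, z, g * x, g * y, g * z}
      ((hlim (g * x) (g * y) (g * z)).and (hlim x y z))
    rw [← h₁, ← h₂]
    exact (hc F).mul_left g x y z (hF (by simp)) (hF (by simp)) (hF (by simp)) (hF (by simp))
      (hF (by simp)) (hF (by simp))

end CircularOrdering

theorem LeftOrderable.of_subsingleton {G : Type*} [Group G] [Subsingleton G] :
    LeftOrderable G :=
  ⟨fun _ _ ↦ False,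
    { trichotomous := fun a b _ _ ↦ Subsingleton.elim a b
      irrefl := fun _ h ↦ h
      trans := fun _ _ _ h _ ↦ h },
    fun _ _ _ h ↦ h⟩

section LeftOrder

variable {K : Type*} [Group K] {r : K → K → Prop}

open Classical in
noncomputable def leftOrderSign (r : K → K → Prop) (k : K) : ℤ :=
  if r 1 k then 1 else if r k 1 then -1 else 0

theorem leftOrderSign_mem (k : K) :
    leftOrderSign r k = 0 ∨ leftOrderSign r k = 1 ∨ leftOrderSign r k = -1 := by
  unfold leftOrderSign; split_ifs <;> simp

theorem leftOrderSign_eq_one_iff {k : K} : leftOrderSign r k = 1 ↔ r 1 k := by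
  unfold leftOrderSign; split_ifs <;> simp_all

variable [IsStrictTotalOrder K r]

theorem leftOrderSign_eq_neg_one_iff {k : K} : leftOrderSign r k = -1 ↔ r k 1 := by
  unfold leftOrderSign
  split_ifs with h h'
  · simp [asymm h]
  · simp [h']
  · simp [h']

theorem leftOrderSign_eq_zero_iff {k : K} : leftOrderSign r k = 0 ↔ k = 1 := by
  unfold leftOrderSign
  split_ifs with h h'
  · simp [(ne_of_irrefl h).symm]
  · simp [ne_of_irrefl h']
  · simpa [eq_comm] using Std.Trichotomous.trichotomous 1 k h h'

theorem leftOrderSign_add_sub_mul_mem_and_eq_zero_iff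
    (hr : ∀ f g h : K, r g h → r (f * g) (f * h)) (k l : K) :
    (leftOrderSign r k + leftOrderSign r l - leftOrderSign r (k * l) = 0 ∨
      leftOrderSign r k + leftOrderSign r l - leftOrderSign r (k * l) = 1 ∨
      leftOrderSign r k + leftOrderSign r l - leftOrderSign r (k * l) = -1) ∧
    (leftOrderSign r k + leftOrderSign r l - leftOrderSign r (k * l) = 0 ↔
      k = 1 ∨ l = 1 ∨ k * l = 1) := by
  have pos : leftOrderSign r k = 1 → leftOrderSign r l = 1 → leftOrderSign r (k * l) = 1 := by
    simp only [leftOrderSign_eq_one_iff]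
    exact fun hk hl ↦ _root_.trans hk (by simpa using hr k 1 l hl)
  have neg : leftOrderSign r k = -1 → leftOrderSign r l = -1 → leftOrderSign r (k * l) = -1 := by
    simp only [leftOrderSign_eq_neg_one_iff]
    exact fun hk hl ↦ _root_.trans (by simpa using hr k l 1 hl) hk
  have left : leftOrderSign r k = 0 → leftOrderSign r (k * l) = leftOrderSign r l := by
    rw [leftOrderSign_eq_zero_iff]; rintro rfl; rw [one_mul]
  have right : leftOrderSign r l = 0 → leftOrderSign r (k * l) = leftOrderSign r k := by
    rw [leftOrderSign_eq_zero_iff]; rintro rfl; rw [mul_one]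
  rw [← leftOrderSign_eq_zero_iff (r := r) (k := k), ← leftOrderSign_eq_zero_iff (r := r) (k := l),
    ← leftOrderSign_eq_zero_iff (r := r) (k := k * l)]
  have := leftOrderSign_mem (r := r) k
  have := leftOrderSign_mem (r := r) l
  have := leftOrderSign_mem (r := r) (k * l)
  omega

end LeftOrder

section Coboundary

variable {G : Type*} [Group G]

def coboundary (t : G → ℤ) (x y z : G) : ℤ :=
  t (x⁻¹ * y) + t (y⁻¹ * z) - t (x⁻¹ * z)

theorem coboundary_cocycle (t : G → ℤ) (x₁ x₂ x₃ x₄ : G) :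
    coboundary t x₁ x₂ x₃ - coboundary t x₁ x₂ x₄ + coboundary t x₁ x₃ x₄
      - coboundary t x₂ x₃ x₄ = 0 := by
  unfold coboundary; ring

theorem coboundary_mul_left (t : G → ℤ) (g x y z : G) :
    coboundary t (g * x) (g * y) (g * z) = coboundary t x y z := by
  simp [coboundary, mul_assoc]

end Coboundary

section Lex

variable {H C : Type*} [Group H] [Group C] {φ : H →* C} {cC : C → C → C → ℤ}
  {K : Subgroup H} {r : K → K → Prop}

open Classical in
noncomputable def kerSign (φ : H →* C) (K : Subgroup H) (r : K → K → Prop) (h : H) : ℤ :=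
  if hK : h ∈ K ∧ φ h = 1 then leftOrderSign r ⟨h, hK.1⟩ else 0

noncomputable def lexCircularOrdering (φ : H →* C) (cC : C → C → C → ℤ) (K : Subgroup H)
    (r : K → K → Prop) (x y z : H) : ℤ :=
  cC (φ x) (φ y) (φ z) + coboundary (kerSign φ K r) x y z

theorem lexCircularOrdering_cocycle (hcC : IsCircularOrdering cC) (x₁ x₂ x₃ x₄ : H) :
    lexCircularOrdering φ cC K r x₁ x₂ x₃ - lexCircularOrdering φ cC K r x₁ x₂ x₄
      + lexCircularOrdering φ cC K r x₁ x₃ x₄ - lexCircularOrdering φ cC K r x₂ x₃ x₄ = 0 := by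
  have := hcC.2.2.1 (φ x₁) (φ x₂) (φ x₃) (φ x₄)
  have := coboundary_cocycle (kerSign φ K r) x₁ x₂ x₃ x₄
  unfold lexCircularOrdering
  linarith

theorem lexCircularOrdering_mul_left (hcC : IsCircularOrdering cC) (g x y z : H) :
    lexCircularOrdering φ cC K r (g * x) (g * y) (g * z) = lexCircularOrdering φ cC K r x y z := by
  simp only [lexCircularOrdering, coboundary_mul_left, map_mul, hcC.2.2.2]

theorem kerSign_inv_mul_of_eq {x y : H} (h : φ x = φ y) (hK : x⁻¹ * y ∈ K) :
    kerSign φ K r (x⁻¹ * y) = leftOrderSign r ⟨x⁻¹ * y, hK⟩ := by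
  rw [kerSign, dif_pos ⟨hK, by simp [h]⟩]

theorem kerSign_inv_mul_of_ne {x y : H} (h : φ x ≠ φ y) : kerSign φ K r (x⁻¹ * y) = 0 := by
  rw [kerSign, dif_neg]
  simp [inv_mul_eq_one, h]

variable [IsStrictTotalOrder K r]

theorem kerSign_inv_mul_mem_and_eq_zero_iff {x y : H} (h : φ x = φ y) (hK : x⁻¹ * y ∈ K) :
    (kerSign φ K r (x⁻¹ * y) = 0 ∨ kerSign φ K r (x⁻¹ * y) = 1 ∨
      kerSign φ K r (x⁻¹ * y) = -1) ∧ (kerSign φ K r (x⁻¹ * y) = 0 ↔ x = y) := by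
  rw [kerSign_inv_mul_of_eq h hK]
  refine ⟨leftOrderSign_mem _, ?_⟩
  rw [leftOrderSign_eq_zero_iff, Subgroup.mk_eq_one, inv_mul_eq_one]

theorem lexCircularOrdering_mem_and_eq_zero_iff (hr : ∀ f g h : K, r g h → r (f * g) (f * h))
    (hcC : IsCircularOrdering cC) {x y z : H}
    (hxy : φ x = φ y → x⁻¹ * y ∈ K) (hyz : φ y = φ z → y⁻¹ * z ∈ K)
    (hxz : φ x = φ z → x⁻¹ * z ∈ K) :
    (lexCircularOrdering φ cC K r x y z = 0 ∨ lexCircularOrdering φ cC K r x y z = 1 ∨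
      lexCircularOrdering φ cC K r x y z = -1) ∧
    (lexCircularOrdering φ cC K r x y z = 0 ↔ x = y ∨ x = z ∨ y = z) := by
  have ne_of_map_ne {a b : H} (h : φ a ≠ φ b) : a ≠ b := fun e ↦ h (congrArg φ e)
  by_cases h₁ : φ x = φ y <;> by_cases h₂ : φ y = φ z
  · have h₃ : φ x = φ z := h₁.trans h₂
    have key :=
      leftOrderSign_add_sub_mul_mem_and_eq_zero_iff hr ⟨x⁻¹ * y, hxy h₁⟩ ⟨y⁻¹ * z, hyz h₂⟩
    rw [show (⟨x⁻¹ * y, hxy h₁⟩ * ⟨y⁻¹ * z, hyz h₂⟩ : K) = ⟨x⁻¹ * z, hxz h₃⟩ from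
      Subtype.ext (by simp [mul_assoc])] at key
    simp only [Subgroup.mk_eq_one, inv_mul_eq_one] at key
    simp only [lexCircularOrdering, coboundary, kerSign_inv_mul_of_eq h₁ (hxy h₁),
      kerSign_inv_mul_of_eq h₂ (hyz h₂), kerSign_inv_mul_of_eq h₃ (hxz h₃),
      (hcC.2.1 _ _ _).2 (Or.inl h₁), zero_add]
    tauto
  · have h₃ : φ x ≠ φ z := fun h ↦ h₂ (h₁.symm.trans h)
    obtain ⟨hmem, hzero⟩ := kerSign_inv_mul_mem_and_eq_zero_iff (r := r) h₁ (hxy h₁)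
    simp only [lexCircularOrdering, coboundary, kerSign_inv_mul_of_ne h₂,
      kerSign_inv_mul_of_ne h₃, (hcC.2.1 _ _ _).2 (Or.inl h₁), ne_of_map_ne h₂,
      ne_of_map_ne h₃, or_false, ← hzero]
    omega
  · have h₃ : φ x ≠ φ z := fun h ↦ h₁ (h.trans h₂.symm)
    obtain ⟨hmem, hzero⟩ := kerSign_inv_mul_mem_and_eq_zero_iff (r := r) h₂ (hyz h₂)
    simp only [lexCircularOrdering, coboundary, kerSign_inv_mul_of_ne h₁,
      kerSign_inv_mul_of_ne h₃, (hcC.2.1 _ _ _).2 (Or.inr (Or.inr h₂)), ne_of_map_ne h₁,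
      ne_of_map_ne h₃, false_or, ← hzero]
    omega
  · by_cases h₃ : φ x = φ z
    · obtain ⟨hmem, hzero⟩ := kerSign_inv_mul_mem_and_eq_zero_iff (r := r) h₃ (hxz h₃)
      simp only [lexCircularOrdering, coboundary, kerSign_inv_mul_of_ne h₁,
        kerSign_inv_mul_of_ne h₂, (hcC.2.1 _ _ _).2 (Or.inr (Or.inl h₃)), ne_of_map_ne h₁,
        ne_of_map_ne h₂, false_or, or_false, ← hzero]
      omega
    · simp only [lexCircularOrdering, coboundary, kerSign_inv_mul_of_ne h₁,
        kerSign_inv_mul_of_ne h₂, kerSign_inv_mul_of_ne h₃, ne_of_map_ne h₁,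
        ne_of_map_ne h₂, ne_of_map_ne h₃, or_self, add_zero, sub_zero]
      refine ⟨hcC.1 _ _ _, ?_⟩
      rw [hcC.2.1]
      tauto

theorem isCircularOrderingOn_lexCircularOrdering (hr : ∀ f g h : K, r g h → r (f * g) (f * h))
    (hcC : IsCircularOrdering cC) {S : Set H}
    (hS : ∀ x ∈ S, ∀ y ∈ S, φ x = φ y → x⁻¹ * y ∈ K) :
    IsCircularOrderingOn S (lexCircularOrdering φ cC K r) where
  mem x hx y hy z hz :=
    (lexCircularOrdering_mem_and_eq_zero_iff hr hcC (hS x hx y hy) (hS y hy z hz)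
      (hS x hx z hz)).1
  eq_zero_iff x hx y hy z hz :=
    (lexCircularOrdering_mem_and_eq_zero_iff hr hcC (hS x hx y hy) (hS y hy z hz)
      (hS x hx z hz)).2
  cocycle x₁ _ x₂ _ x₃ _ x₄ _ := lexCircularOrdering_cocycle hcC x₁ x₂ x₃ x₄
  mul_left g x y z _ _ _ _ _ _ := lexCircularOrdering_mul_left hcC g x y z

end Lex

/-- `G` is circularly orderable iff for each finite `X ⊆ G` there is a surjection
`φ : ⟨X⟩ → C` onto a circularly orderable group such that the subgroup generated by
`X⁻¹X ∩ ker φ` is left-orderable. -/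
theorem circularlyOrderable_iff_leftOrderable_kernel {G : Type u} [Group G] :
    CircularlyOrderable G ↔
      ∀ X : Finset G,
        ∃ (C : Type u) (_ : Group C) (φ : Subgroup.closure (X : Set G) →* C),
          Function.Surjective φ ∧ CircularlyOrderable C ∧
          LeftOrderable
            (Subgroup.closure
              {g : Subgroup.closure (X : Set G) |
                (∃ x ∈ X, ∃ y ∈ X, (g : G) = x⁻¹ * y) ∧ g ∈ φ.ker}) := by
  constructor
  · rintro ⟨c, hc⟩ X
    refine ⟨_, inferInstance, MonoidHom.id _, Function.surjective_id,
      ⟨_, hc.comp_injective _ (Subgroup.subtype_injective _)⟩, ?_⟩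
    have hbot : Subgroup.closure {g : Subgroup.closure (X : Set G) |
        (∃ x ∈ X, ∃ y ∈ X, (g : G) = x⁻¹ * y) ∧ g ∈ (MonoidHom.id _).ker} = ⊥ := by
      rw [eq_bot_iff, Subgroup.closure_le, MonoidHom.ker_id]
      exact fun g hg ↦ hg.2
    rw [hbot]
    exact LeftOrderable.of_subsingleton
  · intro h
    refine circularlyOrderable_of_forall_finset fun X ↦ ?_
    obtain ⟨C, _, φ, -, ⟨cC, hcC⟩, r, _, hr⟩ := h X
    refine IsCircularOrderingOn.exists_of_subgroup (fun x hx ↦ Subgroup.subset_closure hx)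
      (isCircularOrderingOn_lexCircularOrdering (φ := φ) hr hcC fun x hx y hy hxy ↦ ?_)
    exact Subgroup.subset_closure ⟨⟨x, hx, y, hy, rfl⟩, by simp [hxy]⟩
end
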